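/- Let 𝔤 be the 3-dimensional real Lie algebra with basis {e₁,e₂,e₃} and nonzero brackets [e₁,e₂]=a e₂ - e₃, [e₁,e₃]=e₂ + a e₃, for a fixed real number a ≥ 0. Then the space of derivations of 𝔤, as matrices in this basis, equals the set of matrices [[0,0,0],[x₂₁,x₂₂,-x₂₃],[x₃₁,x₂₃,x₂₂]] with x₂₁,x₂₂,x₂₃,x₃₁ ∈ ℝ. -/
import Mathlib


open Matrix

/-- The bracket of 𝔯'_{3,a} on ℝ³ : [e₁,e₂]=a e₂ - e₃, [e₁,e₃]=e₂+a e₃, [e₂,e₃]=0. -/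
def br3a' (a : ℝ) (x y : Fin 3 → ℝ) : Fin 3 → ℝ :=
  ![0,
    a * (x 0 * y 1 - x 1 * y 0) + (x 0 * y 2 - x 2 * y 0),
    -(x 0 * y 1 - x 1 * y 0) + a * (x 0 * y 2 - x 2 * y 0)]

/-- The derivations of 𝔯'_{3,a} (a ≥ 0) are exactly the matrices
    [[0,0,0],[x₂₁,x₂₂,-x₂₃],[x₃₁,x₂₃,x₂₂]]. -/
theorem derivations_r3a' (a : ℝ) (ha : 0 ≤ a) :
    {D : Matrix (Fin 3) (Fin 3) ℝ |
      ∀ x y, D.mulVec (br3a' a x y) = br3a' a (D.mulVec x) y + br3a' a x (D.mulVec y)} =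
    {D : Matrix (Fin 3) (Fin 3) ℝ |
      ∃ x21 x22 x23 x31 : ℝ, D = !![0,0,0; x21,x22,-x23; x31,x23,x22]} := by
  ext D
  simp only [Set.mem_setOf_eq]
  constructor
  · intro h
    have hA := h ![1,0,0] ![0,1,0]
    have hB := h ![1,0,0] ![0,0,1]
    have hA0 := congrFun hA 0
    have hA1 := congrFun hA 1
    have hA2 := congrFun hA 2
    have hB0 := congrFun hB 0
    have hB1 := congrFun hB 1
    have hB2 := congrFun hB 2
    simp [br3a', mulVec, dotProduct, Fin.sum_univ_three] at hA0 hA1 hA2 hB0 hB1 hB2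
    have h01 : D 0 1 = 0 := by nlinarith [sq_nonneg a]
    have h02 : D 0 2 = 0 := by nlinarith
    have h00 : D 0 0 = 0 := by nlinarith
    refine ⟨D 1 0, D 1 1, D 2 1, D 2 0, ?_⟩
    ext i j
    fin_cases i <;> fin_cases j <;>
      simp_all <;> nlinarith
  · rintro ⟨x21, x22, x23, x31, rfl⟩ x y
    funext i
    fin_cases i <;>
      simp [br3a', mulVec, dotProduct, Fin.sum_univ_three] <;> ring
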